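/- arXiv:1012.3687 — 4 statements merged into one kernel-verified Lean document; each statement's English description precedes it below -/
import Mathlib

section
/- In K[[T]]: ∏_{i=1}^m (q − q^{−1}A_i T)·(1 − A_i T)^{−1} = q^m + (q − q^{−1}) ∑_{r≥1} ( ∑_{i=1}^m A_i^r ∏_{j≠i} (qA_i − q^{−1}A_j)/(A_i − A_j) ) T^r. -/
/-!
Put `z = T⁻¹` in the field of Laurent series. The numerator `f(z) = ∏ᵢ (qz − q⁻¹Aᵢ)` has degree
at most `m` and `zᵐ`-coefficient `qᵐ`, so `f − qᵐ ∏ⱼ (z − Aⱼ)` has degree `< m` and is the Lagrange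
interpolant of its values `f(Aᵢ) = (q − q⁻¹) Aᵢ ∏_{j≠i} (qAᵢ − q⁻¹Aⱼ)` at the distinct nodes `Aᵢ`.
The first barycentric form of that interpolant is the partial fraction expansion
`f(z) / ∏ⱼ (z − Aⱼ) = qᵐ + (q − q⁻¹) ∑ᵢ Pᵢ Aᵢ / (z − Aᵢ)` with
`Pᵢ = ∏_{j≠i} (qAᵢ − q⁻¹Aⱼ) / (Aᵢ − Aⱼ)`, and `Aᵢ / (z − Aᵢ) = AᵢT / (1 − AᵢT)` expands as
`∑_{r≥1} Aᵢʳ Tʳ`.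
-/

open Finset

namespace Lagrange

open Polynomial

variable {F ι : Type*} [Field F] {s : Finset ι} {v : ι → F}

theorem degree_sub_C_mul_nodal_lt {f : F[X]} (hf : f.natDegree ≤ #s) :
    (f - C (f.coeff #s) * nodal s v).degree < #s := by
  rw [degree_lt_iff_coeff_zero]
  intro n hn
  rcases hn.lt_or_eq with hlt | rfl
  · have hnodal : (nodal s v).natDegree < n := natDegree_nodal (v := v) ▸ hlt
    rw [coeff_sub, coeff_C_mul, coeff_eq_zero_of_natDegree_lt (hf.trans_lt hlt),
      coeff_eq_zero_of_natDegree_lt hnodal, mul_zero, sub_zero]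
  · rw [coeff_sub, coeff_C_mul, ← natDegree_nodal (v := v), nodal_monic.coeff_natDegree,
      mul_one, natDegree_nodal, sub_self]

variable [DecidableEq ι]

theorem eval_div_eval_nodal (hvs : Set.InjOn v s) {f : F[X]} (hf : f.natDegree ≤ #s) {x : F}
    (hx : ∀ i ∈ s, x ≠ v i) :
    f.eval x / (nodal s v).eval x =
      f.coeff #s + ∑ i ∈ s, nodalWeight s v i * (x - v i)⁻¹ * f.eval (v i) := by
  set g := f - C (f.coeff #s) * nodal s v
  have hg : g = interpolate s v fun i => f.eval (v i) :=
    eq_interpolate_of_eval_eq _ hvs (degree_sub_C_mul_nodal_lt hf) fun i hi => by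
      simp [g, eval_nodal_at_node hi]
  have hfg : f = C (f.coeff #s) * nodal s v + g := by simp [g]
  rw [div_eq_iff (eval_nodal_not_at_node hx)]
  conv_lhs => rw [hfg, eval_add, eval_mul, eval_C, hg, eval_interpolate_not_at_node _ hx]
  ring

end Lagrange

section PartialFractions

open Polynomial Lagrange

variable {F ι : Type*} [Field F] {s : Finset ι} (q : F) {A : ι → F}

theorem natDegree_prod_C_mul_X_sub_C_le (b : ι → F) :
    (∏ i ∈ s, (C q * X - C (b i))).natDegree ≤ #s := by
  refine (natDegree_prod_le _ _).trans ?_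
  exact (sum_le_card_nsmul s _ 1 fun i _ => by compute_degree).trans (by simp)

theorem coeff_prod_C_mul_X_sub_C (b : ι → F) :
    (∏ i ∈ s, (C q * X - C (b i))).coeff #s = q ^ #s := by
  nth_rw 1 [← mul_one #s]
  rw [coeff_prod_of_natDegree_le s (fun i => C q * X - C (b i)) 1 fun i _ => by compute_degree]
  simp [coeff_C]

variable [DecidableEq ι]

theorem prod_mul_sub_div_sub_eq (hA : Set.InjOn A s) {z : F} (hz : ∀ i ∈ s, z ≠ A i) :
    ∏ i ∈ s, (q * z - q⁻¹ * A i) / (z - A i) = q ^ #s + (q - q⁻¹) *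
      ∑ i ∈ s, (∏ j ∈ s.erase i, (q * A i - q⁻¹ * A j) / (A i - A j)) * (A i / (z - A i)) := by
  have hprod : ∏ i ∈ s, (q * z - q⁻¹ * A i) / (z - A i) =
      (∏ i ∈ s, (C q * X - C (q⁻¹ * A i))).eval z / (nodal s A).eval z := by
    simp [prod_div_distrib, eval_prod, eval_nodal]
  rw [hprod, eval_div_eval_nodal hA (natDegree_prod_C_mul_X_sub_C_le q _) hz,
    coeff_prod_C_mul_X_sub_C, mul_sum]
  congr 1
  refine sum_congr rfl fun i hi => ?_
  rw [eval_prod, ← mul_prod_erase _ _ hi, nodalWeight, div_eq_mul_inv, prod_div_distrib]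
  simp only [eval_sub, eval_mul, eval_C, eval_X, div_eq_mul_inv, prod_inv_distrib]
  ring

theorem prod_sub_mul_inv_one_sub_eq (hA : Set.InjOn A s) {t : F} (ht : t ≠ 0)
    (hAt : ∀ i ∈ s, 1 - A i * t ≠ 0) :
    ∏ i ∈ s, (q - q⁻¹ * A i * t) * (1 - A i * t)⁻¹ = q ^ #s + (q - q⁻¹) *
      ∑ i ∈ s, (∏ j ∈ s.erase i, (q * A i - q⁻¹ * A j) / (A i - A j)) *
        (A i * t * (1 - A i * t)⁻¹) := by
  have hz : ∀ i ∈ s, t⁻¹ ≠ A i := fun i hi h => hAt i hi (by rw [← h, inv_mul_cancel₀ ht, sub_self])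
  have hfactor : ∀ i ∈ s,
      (q - q⁻¹ * A i * t) * (1 - A i * t)⁻¹ = (q * t⁻¹ - q⁻¹ * A i) / (t⁻¹ - A i) :=
    fun i hi => by have := hAt i hi; field_simp
  have hfraction : ∀ i ∈ s, A i * t * (1 - A i * t)⁻¹ = A i / (t⁻¹ - A i) :=
    fun i hi => by have := hAt i hi; field_simp
  rw [prod_congr rfl hfactor, prod_mul_sub_div_sub_eq q hA hz]
  congr 2
  exact sum_congr rfl fun i hi => by rw [hfraction i hi]

end PartialFractions

namespace PowerSeries

variable {K : Type*} [Field K]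

theorem mk_pow_eq_inv_one_sub_C_mul_X (a : K) : mk (a ^ ·) = (1 - C a * X)⁻¹ := by
  rw [eq_inv_iff_mul_eq_one (by simp)]
  simpa [rescale_mk] using congrArg (rescale a) (mk_one_mul_one_sub_eq_one (S := K))

theorem C_mul_X_mul_inv_one_sub_C_mul_X (a : K) :
    C a * X * (1 - C a * X)⁻¹ = mk fun r => if r = 0 then 0 else a ^ r := by
  rw [← mk_pow_eq_inv_one_sub_C_mul_X]
  ext (_ | r)
  · simp
  · rw [show C a * X * mk (a ^ ·) = X * (C a * mk (a ^ ·)) by ring, coeff_succ_X_mul]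
    simp [pow_succ']

theorem mk_ite_zero_sum_pow_mul {ι : Type*} (s : Finset ι) (c d : K) (a p : ι → K) :
    mk (fun r => if r = 0 then c else d * ∑ i ∈ s, a i ^ r * p i) =
      C c + C d * ∑ i ∈ s, C (p i) * (C (a i) * X * (1 - C (a i) * X)⁻¹) := by
  ext (_ | r) <;>
    simp only [C_mul_X_mul_inv_one_sub_C_mul_X, map_add, coeff_C, coeff_C_mul, map_sum,
      coeff_mk, mul_sum]
  · simp
  · simp [mul_comm]

end PowerSeries

namespace HahnSeries

variable {K : Type*} [Field K]

theorem ofPowerSeries_inv {f : PowerSeries K} (hf : PowerSeries.constantCoeff f ≠ 0) :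
    ofPowerSeries ℤ K f⁻¹ = (ofPowerSeries ℤ K f)⁻¹ :=
  eq_inv_of_mul_eq_one_left <| by rw [← map_mul, PowerSeries.inv_mul_cancel _ hf, map_one]

theorem ofPowerSeries_ne_zero {f : PowerSeries K} (hf : f ≠ 0) : ofPowerSeries ℤ K f ≠ 0 :=
  (map_ne_zero_iff _ ofPowerSeries_injective).2 hf

end HahnSeries

theorem statement1_general {K : Type*} [Field K] (m : ℕ)
    (q : K) (A : Fin m → K) (hA : Function.Injective A) :
    (∏ i : Fin m,
      ((PowerSeries.C (R := K) q - PowerSeries.C (R := K) (q⁻¹ * A i) * PowerSeries.X) *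
        (1 - PowerSeries.C (R := K) (A i) * PowerSeries.X)⁻¹)) =
    PowerSeries.mk (fun r => if r = 0 then q ^ m else
      (q - q⁻¹) * ∑ i : Fin m, A i ^ r *
        ∏ j ∈ Finset.univ.erase i, (q * A i - q⁻¹ * A j) / (A i - A j)) := by
  have hunit (a : K) : PowerSeries.constantCoeff (1 - PowerSeries.C a * PowerSeries.X) ≠ 0 := by
    simp
  have ht : HahnSeries.ofPowerSeries ℤ K PowerSeries.X ≠ 0 :=
    HahnSeries.ofPowerSeries_ne_zero PowerSeries.X_ne_zero
  have hAt (a : K) : 1 - HahnSeries.C a * HahnSeries.ofPowerSeries ℤ K PowerSeries.X ≠ 0 := by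
    simpa [HahnSeries.ofPowerSeries_C] using
      HahnSeries.ofPowerSeries_ne_zero (ne_zero_of_map (hunit a))
  rw [PowerSeries.mk_ite_zero_sum_pow_mul]
  apply HahnSeries.ofPowerSeries_injective (Γ := ℤ)
  simp only [map_prod, map_mul, map_sub, map_add, map_sum, map_one, map_pow, map_inv₀, map_div₀,
    HahnSeries.ofPowerSeries_inv (hunit _), HahnSeries.ofPowerSeries_C]
  simpa using prod_sub_mul_inv_one_sub_eq (HahnSeries.C q) (s := univ)
    ((HahnSeries.C_injective (Γ := ℤ)).comp hA).injOn ht fun i _ => hAt (A i)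

/-- **Partial fraction expansion in `K[[T]]`.**
For a field `K`, `q ≠ 0` and pairwise distinct `A₁, …, A_m`, one has
`∏ᵢ (q − q⁻¹Aᵢ T)(1 − Aᵢ T)⁻¹
  = qᵐ + (q − q⁻¹) ∑_{r≥1} (∑ᵢ Aᵢʳ ∏_{j≠i} (qAᵢ − q⁻¹Aⱼ)/(Aᵢ − Aⱼ)) Tʳ`. -/
theorem statement1 {K : Type*} [Field K] (m : ℕ) (hm : 1 ≤ m)
    (q : K) (hq : q ≠ 0) (A : Fin m → K) (hA : Function.Injective A) :
    (∏ i : Fin m,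
      ((PowerSeries.C (R := K) q - PowerSeries.C (R := K) (q⁻¹ * A i) * PowerSeries.X) *
        (1 - PowerSeries.C (R := K) (A i) * PowerSeries.X)⁻¹)) =
    PowerSeries.mk (fun r => if r = 0 then q ^ m else
      (q - q⁻¹) * ∑ i : Fin m, A i ^ r *
        ∏ j ∈ Finset.univ.erase i, (q * A i - q⁻¹ * A j) / (A i - A j)) :=
  statement1_general m q A hA
end

section
/- In ℚ[[u, v, c]]: exp( G(v − u + c) − G(v − u − c) ) · P(u, v + c) = P(v, u + c). -/
/-!
The three series are determined by the linear equations they satisfy, since `ℚ[[u,v,c]]` is a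
domain. Clearing the nonzero denominators turns the claim into an identity between sums of
exponentials of linear forms, which follows from the exponential law `e^x e^y = e^{x+y}`.
Since `exp(a·u + b·v + c·w) = e^{a u} e^{b v} e^{c w}` is a product of series in separate
variables, that law reduces to the one-variable law coordinate by coordinate.
-/

noncomputable section

open MvPowerSeries

/-- The exponential `exp(a·u + b·v + c·w) ∈ ℚ[[u,v,w]]` of a linear form:
its coefficient at `u^{d₀} v^{d₁} w^{d₂}` is `a^{d₀} b^{d₁} c^{d₂}/(d₀! d₁! d₂!)`. -/
def expLin3 (a b c : ℚ) : MvPowerSeries (Fin 3) ℚ :=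
  fun d => (a ^ (d 0) / (d 0).factorial) * (b ^ (d 1) / (d 1).factorial) *
    (c ^ (d 2) / (d 2).factorial)

namespace MvPowerSeries

variable {σ R : Type*} [Fintype σ] [CommSemiring R]

/-- `prodInVars f = ∏ i, f i (X i)`. -/
def prodInVars (f : σ → PowerSeries R) : MvPowerSeries σ R :=
  fun d => ∏ i, PowerSeries.coeff (d i) (f i)

theorem coeff_prodInVars (f : σ → PowerSeries R) (d : σ →₀ ℕ) :
    coeff d (prodInVars f) = ∏ i, PowerSeries.coeff (d i) (f i) := rfl

theorem prodInVars_mul (f g : σ → PowerSeries R) :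
    prodInVars f * prodInVars g = prodInVars (f * g) := by
  classical
  ext d
  simp only [coeff_mul, coeff_prodInVars, Pi.mul_apply, PowerSeries.coeff_mul,
    ← Finset.prod_mul_distrib, Finset.prod_univ_sum]
  -- splitting `d = p + q` is the same as splitting each coordinate `d i = p i + q i`
  refine Finset.sum_nbij' (fun p i => (p.1 i, p.2 i))
    (fun x => (Finsupp.equivFunOnFinite.symm fun i => (x i).1,
      Finsupp.equivFunOnFinite.symm fun i => (x i).2)) ?_ ?_ ?_ ?_ ?_
  · intro p hp
    rw [Finset.HasAntidiagonal.mem_antidiagonal] at hp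
    simp [Fintype.mem_piFinset, ← hp]
  · intro x hx
    simp only [Fintype.mem_piFinset, Finset.HasAntidiagonal.mem_antidiagonal] at hx
    rw [Finset.HasAntidiagonal.mem_antidiagonal]
    ext i
    simp [hx i]
  · intro p _
    ext <;> simp
  · exact fun _ _ => rfl
  · exact fun _ _ => rfl

end MvPowerSeries

open PowerSeries in
theorem expLin3_eq_prodInVars (a b c : ℚ) :
    expLin3 a b c = prodInVars ![rescale a (exp ℚ), rescale b (exp ℚ), rescale c (exp ℚ)] := by
  ext d
  rw [coeff_prodInVars, Fin.prod_univ_three]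
  simp [expLin3, coeff_apply, coeff_exp, div_eq_mul_inv]

theorem expLin3_mul_expLin3 (a b c a' b' c' : ℚ) :
    expLin3 a b c * expLin3 a' b' c' = expLin3 (a + a') (b + b') (c + c') := by
  simp only [expLin3_eq_prodInVars, prodInVars_mul]
  congr 1
  ext1 i
  fin_cases i <;> exact PowerSeries.exp_mul_exp_eq_exp_add _ _

theorem coeff_single_one_expLin3 (a b c : ℚ) :
    coeff (Finsupp.single 1 1) (expLin3 a b c) = b := by
  simp [expLin3, coeff_apply]

/- With `s(t) = e^{t/2} - e^{-t/2}`, the hypotheses say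
`Egg · s(v-u+c) · (v-u-c) = (v-u+c) · s(v-u-c)`; multiplying the claim by the nonzero
`s(v-u+c) · (v-u-c)` reduces it to `s(v-u-c) (e^{v+c} - e^u) = s(v-u+c) (e^v - e^{u+c})`,
whose sides expand into the same four exponentials. -/
/-- In `ℚ[[u, v, c]]` one has
`exp(G(v − u + c) − G(v − u − c)) · P(u, v + c) = P(v, u + c)`,
where `(x − y)·P(x,y) = eˣ − e^y` and `G(w) = log(w/(e^{w/2} − e^{−w/2}))`.

The three substituted series are pinned down by their unique algebraic characterisations
(`ℚ[[u,v,c]]` is an integral domain, so each of the equations below has at most one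
solution):
* `P₁ = P(u, v+c)` satisfies `(u − v − c)·P₁ = e^u − e^{v+c}`;
* `P₂ = P(v, u+c)` satisfies `(v − u − c)·P₂ = e^v − e^{u+c}`;
* `Egg = exp(G(v−u+c) − G(v−u−c))` satisfies, by the functional equation
  `exp(G(w))·(e^{w/2} − e^{−w/2}) = w`,
  `Egg · (e^{(v−u+c)/2} − e^{−(v−u+c)/2}) · (v − u − c)
       = (v − u + c) · (e^{(v−u−c)/2} − e^{−(v−u−c)/2})`.

Here the variables are `u = X 0`, `v = X 1`, `c = X 2`. -/
theorem statement6
    (P₁ P₂ Egg : MvPowerSeries (Fin 3) ℚ)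
    (hP₁ : (X 0 - X 1 - X 2) * P₁ = expLin3 1 0 0 - expLin3 0 1 1)
    (hP₂ : (X 1 - X 0 - X 2) * P₂ = expLin3 0 1 0 - expLin3 1 0 1)
    (hEgg : Egg * (expLin3 (-(1/2)) (1/2) (1/2) - expLin3 (1/2) (-(1/2)) (-(1/2)))
        * (X 1 - X 0 - X 2)
      = (X 1 - X 0 + X 2) *
        (expLin3 (-(1/2)) (1/2) (-(1/2)) - expLin3 (1/2) (-(1/2)) (1/2))) :
    Egg * P₁ = P₂ := by
  set sinhPlus := expLin3 (-(1/2)) (1/2) (1/2) - expLin3 (1/2) (-(1/2)) (-(1/2))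
  set sinhMinus := expLin3 (-(1/2)) (1/2) (-(1/2)) - expLin3 (1/2) (-(1/2)) (1/2)
  have hPlus : sinhPlus ≠ 0 := fun h => by
    simpa [sinhPlus, coeff_single_one_expLin3] using congrArg (coeff (Finsupp.single 1 1)) h
  have hLinear : (X 1 - X 0 - X 2 : MvPowerSeries (Fin 3) ℚ) ≠ 0 := fun h => by
    simpa [coeff_X, Finsupp.single_eq_single_iff] using congrArg (coeff (Finsupp.single 1 1)) h
  have hExp : sinhMinus * (expLin3 0 1 1 - expLin3 1 0 0)
      = sinhPlus * (expLin3 0 1 0 - expLin3 1 0 1) := by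
    simp only [sinhPlus, sinhMinus, sub_mul, mul_sub, expLin3_mul_expLin3]
    ring_nf
  refine mul_right_cancel₀ (mul_ne_zero hPlus hLinear) ?_
  linear_combination P₁ * hEgg - sinhMinus * hP₁ - sinhPlus * hP₂ + hExp

end
end

section
/- For every integer n ≥ 1: ℏ𝒰 ∩ 𝒥^n = ℏ · 𝒥^{n−1}. -/
open Pointwise

noncomputable section

variable {U : Type*} [Ring U] [Algebra ℂ U]

/-- The two-sided ideal `𝒥 = {f ∈ U[[ℏ]] : f(0) ∈ J}` (as an additive submonoid). -/
def Jhat (J : AddSubmonoid U) : AddSubmonoid (PowerSeries U) :=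
  J.comap (PowerSeries.constantCoeff : PowerSeries U →+* U).toAddMonoidHom

/-- Powers of `𝒥`, with the convention `𝒥⁰ = 𝒰` (everything); `𝒥ⁿ⁺¹ = 𝒥·𝒥ⁿ` is the
additive submonoid generated by products, i.e. finite sums of products of `n + 1`
elements of `𝒥`. -/
def Jpow (J : AddSubmonoid U) : ℕ → AddSubmonoid (PowerSeries U)
  | 0 => ⊤
  | n + 1 => Jhat J * Jpow J n

/-!
Dividing by `ℏ` after dropping the constant term maps `𝒥ⁿ⁺¹` into `𝒥ⁿ`. On a product `a b`
with `a ∈ 𝒥`, `b ∈ 𝒥ⁿ` it gives `a(0) · (b / ℏ) + (a / ℏ) · b`: the first term lies in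
`𝒥 · 𝒥ⁿ⁻¹` by induction, the second in `𝒥ⁿ` because `𝒥ⁿ` is a left ideal.
-/

namespace PowerSeries

variable {R : Type*} [Ring R]

def divX (f : R⟦X⟧) : R⟦X⟧ :=
  mk fun n => coeff (n + 1) f

theorem X_mul_divX_add (f : R⟦X⟧) : X * divX f + C (constantCoeff f) = f :=
  (eq_X_mul_shift_add_const f).symm

theorem X_mul_divX_of_constantCoeff_eq_zero {f : R⟦X⟧} (hf : constantCoeff f = 0) :
    X * divX f = f := by
  simpa [hf] using X_mul_divX_add f

theorem divX_add (f g : R⟦X⟧) : divX (f + g) = divX f + divX g := by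
  ext n
  simp [divX]

theorem divX_X_mul_add_C (g : R⟦X⟧) (c : R) : divX (X * g + C c) = g := by
  ext n
  simp [divX, coeff_succ_X_mul]

theorem divX_mul (f g : R⟦X⟧) :
    divX (f * g) = C (constantCoeff f) * divX g + divX f * g := by
  have hfg : f * g = X * (C (constantCoeff f) * divX g + divX f * g)
      + C (constantCoeff f * constantCoeff g) :=
    calc f * g
        = X * (divX f * g) + C (constantCoeff f) * (X * divX g + C (constantCoeff g)) := by
          rw [X_mul_divX_add, ← mul_assoc, ← add_mul, X_mul_divX_add]
      _ = _ := by
          rw [map_mul, mul_add (C _), ← mul_assoc (C _) X, (commute_X _).eq]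
          noncomm_ring
  rw [hfg, divX_X_mul_add_C]

end PowerSeries

open PowerSeries

section JadicFiltration

variable {R : Type*} [Ring R] (J : AddSubmonoid R)

theorem X_mem_Jhat : (X : R⟦X⟧) ∈ Jhat J := by
  simp [Jhat]

variable (hJl : ∀ (u : R) (a : R), a ∈ J → u * a ∈ J)
include hJl

theorem mul_mem_Jhat (u : R⟦X⟧) {a : R⟦X⟧} (ha : a ∈ Jhat J) : u * a ∈ Jhat J := by
  simp only [Jhat, AddSubmonoid.mem_comap, RingHom.toAddMonoidHom_eq_coe,
    AddMonoidHom.coe_coe, map_mul] at ha ⊢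
  exact hJl _ _ ha

theorem mul_mem_Jpow_succ (n : ℕ) (u : R⟦X⟧) {f : R⟦X⟧} (hf : f ∈ Jpow J (n + 1)) :
    u * f ∈ Jpow J (n + 1) := by
  refine AddSubmonoid.mul_induction_on hf (fun a ha b hb => ?_) (fun x y hx hy => ?_)
  · rw [← mul_assoc]
    exact AddSubmonoid.mul_mem_mul (mul_mem_Jhat J hJl u ha) hb
  · rw [mul_add]
    exact add_mem hx hy

theorem divX_mem_Jpow (n : ℕ) {f : R⟦X⟧} (hf : f ∈ Jpow J (n + 1)) : divX f ∈ Jpow J n := by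
  induction n generalizing f with
  | zero => exact AddSubmonoid.mem_top _
  | succ m ih =>
    refine AddSubmonoid.mul_induction_on hf (fun a ha b hb => ?_) (fun x y hx hy => ?_)
    · rw [divX_mul]
      refine add_mem (AddSubmonoid.mul_mem_mul ?_ (ih hb)) (mul_mem_Jpow_succ J hJl m _ hb)
      simpa [Jhat] using ha
    · rw [divX_add]
      exact add_mem hx hy

end JadicFiltration

theorem statement8_general (J : AddSubmonoid U)
    (hJl : ∀ (u : U) (a : U), a ∈ J → u * a ∈ J)
    (n : ℕ) (hn : 1 ≤ n) (f : PowerSeries U) :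
    (PowerSeries.constantCoeff f = 0 ∧ f ∈ Jpow J n) ↔
      ∃ g ∈ Jpow J (n - 1), f = PowerSeries.X * g := by
  obtain ⟨m, rfl⟩ := Nat.exists_eq_add_of_le' hn
  rw [Nat.add_sub_cancel]
  constructor
  · rintro ⟨hf0, hf⟩
    exact ⟨divX f, divX_mem_Jpow J hJl m hf, (X_mul_divX_of_constantCoeff_eq_zero hf0).symm⟩
  · rintro ⟨g, hg, rfl⟩
    exact ⟨by simp, AddSubmonoid.mul_mem_mul (X_mem_Jhat J) hg⟩

/-- Let `U` be a unital associative `ℂ`-algebra, `J ⊆ U` a two-sided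
ideal, `𝒰 = U[[ℏ]]` and `𝒥 = {f : f(0) ∈ J}`.  Then for every `n ≥ 1`,
`ℏ𝒰 ∩ 𝒥ⁿ = ℏ·𝒥ⁿ⁻¹`.  (Note `ℏ𝒰 = {f : f(0) = 0}`, and `ℏ = PowerSeries.X` is central.) -/
theorem statement8 (J : AddSubmonoid U)
    (hJl : ∀ (u : U) (a : U), a ∈ J → u * a ∈ J)
    (hJr : ∀ (a : U), a ∈ J → ∀ u : U, a * u ∈ J)
    (n : ℕ) (hn : 1 ≤ n) (f : PowerSeries U) :
    (PowerSeries.constantCoeff f = 0 ∧ f ∈ Jpow J n) ↔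
      ∃ g ∈ Jpow J (n - 1), f = PowerSeries.X * g :=
  statement8_general J hJl n hn f

end
end

section
/- Every Lie ideal 𝔞 of L[s] is of the form 𝔞 = g·L[s] for some polynomial g ∈ ℂ[s]; that is, 𝔞 = (g) ⊗ L, where (g) is the principal ideal of ℂ[s] generated by g. -/
/-!
By Burnside's theorem (Jacobson density plus Schur's lemma over `ℂ`), the associative algebra
generated by `ad L` is all of `End L`. Hence a Lie ideal `𝔞` of `ℂ[s] ⊗ L` is stable under
`id ⊗ T` for every `T ∈ End L`; applying `id ⊗ (eᵢ* ⊗ w)` to `a = ∑ fᵢ ⊗ eᵢ ∈ 𝔞` gives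
`fᵢ ⊗ L ⊆ 𝔞`. So `𝔞 = J ⊗ L` with `J = {f | f ⊗ L ⊆ 𝔞}`. This `J` is an ideal: for
`f ∈ J`, `{z | rf ⊗ z ∈ 𝔞}` is a Lie ideal of `L` containing every `[x, y]`, as
`[r ⊗ x, f ⊗ y] = rf ⊗ [x, y]`, hence all of `L`. Finally `J = (g)` because `ℂ[s]` is a principal
ideal domain.
-/

open scoped TensorProduct

theorem Subalgebra.eq_top_of_isSimpleModule {K V : Type*} [Field K] [IsAlgClosed K]
    [AddCommGroup V] [Module K V] [FiniteDimensional K V]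
    (A : Subalgebra K (Module.End K V)) [IsSimpleModule A V] : A = ⊤ := by
  have scalar_end := (IsSimpleModule.algebraMap_end_bijective_of_isAlgClosed K (A := A) (V := V)).2
  have : Module.Finite (Module.End A V) V := .of_restrictScalars_finite K _ V
  refine eq_top_iff.mpr fun T _ => ?_
  let T' : Module.End (Module.End A V) V :=
    { toFun := T
      map_add' := T.map_add
      map_smul' := fun φ v => by
        obtain ⟨c, rfl⟩ := scalar_end φ
        exact T.map_smul c v }
  obtain ⟨a, ha⟩ := Module.Finite.toModuleEnd_moduleEnd_surjective T'
  have : (a : Module.End K V) = T := LinearMap.ext fun v => congr($ha v)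
  exact this ▸ a.2

theorem LieModule.adjoin_range_toEnd_eq_top (K L M : Type*) [Field K] [IsAlgClosed K]
    [LieRing L] [LieAlgebra K L] [AddCommGroup M] [Module K M] [FiniteDimensional K M]
    [LieRingModule L M] [LieModule K L M] [LieModule.IsIrreducible K L M] :
    Algebra.adjoin K (Set.range (toEnd K L M)) = ⊤ := by
  set A := Algebra.adjoin K (Set.range (toEnd K L M))
  have : Nontrivial M := (LieSubmodule.nontrivial_iff K L M).mp inferInstance
  have : IsSimpleOrder (Submodule A M) := by
    refine { eq_bot_or_eq_top := fun p => ?_ }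
    let P : LieSubmodule K L M :=
      { p.restrictScalars K with
        lie_mem := fun {x} {m} hm =>
          p.smul_mem ⟨toEnd K L M x, Algebra.subset_adjoin ⟨x, rfl⟩⟩ hm }
    refine (eq_bot_or_eq_top P).imp (fun h => ?_) (fun h => ?_)
    · exact eq_bot_iff.mpr fun m hm => (LieSubmodule.mem_bot m).mp (h ▸ (show m ∈ P from hm))
    · exact eq_top_iff.mpr fun m _ => (show m ∈ P from h ▸ LieSubmodule.mem_top m)
  have : IsSimpleModule A M := { }
  exact A.eq_top_of_isSimpleModule

theorem LieAlgebra.IsSimple.eq_top_of_forall_lie_mem {K L : Type*} [CommRing K] [LieRing L]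
    [LieAlgebra K L] [LieAlgebra.IsSimple K L] (I : LieIdeal K L)
    (h : ∀ x y : L, ⁅x, y⁆ ∈ I) : I = ⊤ :=
  (IsSimple.eq_bot_or_eq_top I).resolve_left fun hI =>
    IsSimple.non_abelian K (L := L) ⟨fun x y => by simpa [hI] using h x y⟩

theorem Module.Basis.exists_eq_smul_iff_forall_dvd_repr {R M ι : Type*} [CommSemiring R]
    [AddCommMonoid M] [Module R M] [Fintype ι] (b : Basis ι R M) (g : R) (a : M) :
    (∃ y, a = g • y) ↔ ∀ i, g ∣ b.repr a i := by
  refine ⟨?_, fun h => ?_⟩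
  · rintro ⟨y, rfl⟩ i
    simp
  · choose c hc using h
    refine ⟨∑ i, c i • b i, ?_⟩
    conv_lhs => rw [← b.sum_repr a]
    simp [Finset.smul_sum, smul_smul, hc]

section CurrentAlgebra

open LinearMap Algebra.TensorProduct LieAlgebra

variable {K R L : Type*} [CommRing K] [CommRing R] [Algebra K R] [LieRing L] [LieAlgebra K L]

theorem LinearMap.lTensor_smulRight_coord_apply {M ι : Type*} [AddCommGroup M]
    [Module K M] (b : Module.Basis ι K M) (i : ι) (w : M) (a : R ⊗[K] M) :
    lTensor R ((b.coord i).smulRight w) a = (basis R b).repr a i ⊗ₜ[K] w := by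
  induction a using TensorProduct.induction_on with
  | zero => simp
  | tmul f z =>
    simp [TensorProduct.tmul_smul, TensorProduct.smul_tmul', Algebra.smul_def, mul_comm]
  | add a b ha hb => rw [map_add, ha, hb, map_add, Finsupp.add_apply, TensorProduct.add_tmul]

theorem LieAlgebra.ExtendScalars.lTensor_ad_apply (x : L) (a : R ⊗[K] L) :
    lTensor R (ad K L x) a = ⁅(1 : R) ⊗ₜ[K] x, a⁆ := by
  induction a using TensorProduct.induction_on with
  | zero => simp
  | tmul f z => simp [ExtendScalars.bracket_tmul]
  | add a b ha hb => rw [map_add, ha, hb, lie_add]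

namespace LieIdeal

variable (I : LieIdeal K (R ⊗[K] L))

def comapTmul (f : R) : LieIdeal K L :=
  { (I : Submodule K (R ⊗[K] L)).comap (TensorProduct.mk K R L f) with
    lie_mem := fun {x z} hz => by
      simpa [ExtendScalars.bracket_tmul] using I.lie_mem (x := (1 : R) ⊗ₜ[K] x) hz }

theorem mem_comapTmul {f : R} {z : L} : z ∈ I.comapTmul f ↔ f ⊗ₜ[K] z ∈ I := Iff.rfl

def coeffIdeal [IsSimple K L] : Ideal R where
  carrier := {f | ∀ z : L, f ⊗ₜ[K] z ∈ I}
  add_mem' hf hg z := by simpa [TensorProduct.add_tmul] using add_mem (hf z) (hg z)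
  zero_mem' z := by simp
  smul_mem' r f hf z := by
    have : I.comapTmul (r * f) = ⊤ := IsSimple.eq_top_of_forall_lie_mem _ fun x y => by
      simpa [mem_comapTmul, ExtendScalars.bracket_tmul] using I.lie_mem (x := r ⊗ₜ[K] x) (hf y)
    exact (I.mem_comapTmul).mp (this ▸ LieSubmodule.mem_top z)

theorem lTensor_mem_of_mem_adjoin {T : Module.End K L}
    (hT : T ∈ Algebra.adjoin K (Set.range (ad K L))) {a : R ⊗[K] L} (ha : a ∈ I) :
    lTensor R T a ∈ I := by
  induction hT using Algebra.adjoin_induction generalizing a with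
  | mem T hT =>
    obtain ⟨x, rfl⟩ := hT
    rw [ExtendScalars.lTensor_ad_apply]
    exact I.lie_mem ha
  | algebraMap c =>
    simpa [Algebra.algebraMap_eq_smul_one, Module.End.one_eq_id] using I.smul_mem c ha
  | add T U _ _ hT hU => rw [lTensor_add, LinearMap.add_apply]; exact add_mem (hT ha) (hU ha)
  | mul T U _ _ hT hU => rw [lTensor_mul, Module.End.mul_apply]; exact hT (hU ha)

end LieIdeal

end CurrentAlgebra

section CurrentAlgebraOverAlgClosed

open LinearMap Algebra.TensorProduct LieAlgebra

variable {K R L : Type*} [Field K] [IsAlgClosed K] [CommRing R] [Algebra K R]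
  [LieRing L] [LieAlgebra K L] [FiniteDimensional K L] [IsSimple K L]

namespace LieIdeal

variable (I : LieIdeal K (R ⊗[K] L))

theorem lTensor_mem (T : Module.End K L) {a : R ⊗[K] L} (ha : a ∈ I) : lTensor R T a ∈ I :=
  I.lTensor_mem_of_mem_adjoin ((LieModule.adjoin_range_toEnd_eq_top K L L).ge trivial) ha

theorem mem_iff_forall_repr_mem_coeffIdeal {ι : Type*} [Fintype ι] (b : Module.Basis ι K L)
    (a : R ⊗[K] L) : a ∈ I ↔ ∀ i, (basis R b).repr a i ∈ I.coeffIdeal := by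
  refine ⟨fun ha i w => ?_, fun h => ?_⟩
  · simpa [lTensor_smulRight_coord_apply] using I.lTensor_mem ((b.coord i).smulRight w) ha
  · rw [← (basis R b).sum_repr a]
    refine sum_mem fun i _ => ?_
    rw [basis_repr_symm_apply']
    exact h i (b i)

end LieIdeal

end CurrentAlgebraOverAlgClosed

/-- Let `L` be a finite-dimensional simple complex Lie algebra and
`L[s] = ℂ[s] ⊗[ℂ] L` its current algebra (with bracket `[f ⊗ x, g ⊗ y] = fg ⊗ [x,y]`).
Every Lie ideal of `L[s]` — i.e. every `ℂ`-subspace `𝔞` with `[L[s], 𝔞] ⊆ 𝔞` — is of the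
form `𝔞 = g·L[s] = (g) ⊗ L` for some polynomial `g ∈ ℂ[s]`. -/
theorem statement9 (L : Type*) [LieRing L] [LieAlgebra ℂ L]
    [FiniteDimensional ℂ L] [LieAlgebra.IsSimple ℂ L]
    (𝔞 : Submodule ℂ (Polynomial ℂ ⊗[ℂ] L))
    (h𝔞 : ∀ (x y : Polynomial ℂ ⊗[ℂ] L), y ∈ 𝔞 → ⁅x, y⁆ ∈ 𝔞) :
    ∃ g : Polynomial ℂ, ∀ x : Polynomial ℂ ⊗[ℂ] L,
      x ∈ 𝔞 ↔ ∃ y : Polynomial ℂ ⊗[ℂ] L, x = g • y := by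
  let I : LieIdeal ℂ (Polynomial ℂ ⊗[ℂ] L) := { 𝔞 with lie_mem := h𝔞 _ _ }
  obtain ⟨g, hg⟩ := (IsPrincipalIdealRing.principal I.coeffIdeal).principal
  refine ⟨g, fun x => ?_⟩
  let b := Module.finBasis ℂ L
  rw [(Algebra.TensorProduct.basis _ b).exists_eq_smul_iff_forall_dvd_repr,
    show x ∈ 𝔞 ↔ x ∈ I from Iff.rfl, I.mem_iff_forall_repr_mem_coeffIdeal b, hg]
  simp only [Ideal.submodule_span_eq, Ideal.mem_span_singleton]
end
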